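/- arXiv:1107.2958 — 3 statements merged into one kernel-verified Lean document; each statement's English description precedes it below -/
import Mathlib

section
/- Let ρ be a 4×4 complex matrix, let k, ℓ ∈ ℝ³ be unit vectors, and define the projectors Π^A_± = (1/2)(σ₀ ± Σᵢ kᵢσᵢ) and Π^B_± = (1/2)(σ₀ ± Σᵢ ℓᵢσᵢ). Set χ = Σ_{s,t∈{+,−}} (Π^A_s⊗Π^B_t) ρ (Π^A_s⊗Π^B_t). Write x_i = Tr[ρ(σ_i⊗σ₀)], y_j = Tr[ρ(σ₀⊗σ_j)], T_{ij} = Tr[ρ(σ_i⊗σ_j)] for i,j ∈ {1,2,3}, and let K = kᵀk, L = ℓᵀℓ. Then Tr[χ(σ₀⊗σ₀)] = Tr[ρ], Tr[χ(σ_i⊗σ₀)] = (xK)_i, Tr[χ(σ₀⊗σ_j)] = (yL)_j, and Tr[χ(σ_i⊗σ_j)] = (KTL)_{ij} for all i,j ∈ {1,2,3}. -/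
open Matrix

/-- The Pauli matrices `σ₁, σ₂, σ₃`. -/
noncomputable def pauli : Fin 3 → Matrix (Fin 2) (Fin 2) ℂ :=
  ![!![0, 1; 1, 0], !![0, -Complex.I; Complex.I, 0], !![1, 0; 0, -1]]

/-- Kronecker product of two `2×2` complex matrices, as a `4×4` complex matrix. -/
noncomputable def kron (A B : Matrix (Fin 2) (Fin 2) ℂ) : Matrix (Fin 4) (Fin 4) ℂ :=
  Matrix.reindex finProdFinEquiv finProdFinEquiv (Matrix.kroneckerMap (· * ·) A B)

/-- The local von Neumann projectors `Π_± = (1/2)(σ₀ ± Σᵢ kᵢσᵢ)` along a direction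
`k ∈ ℝ³` (the `+` projector for `s = true`, the `−` projector for `s = false`). -/
noncomputable def proj (k : Fin 3 → ℝ) (s : Bool) : Matrix (Fin 2) (Fin 2) ℂ :=
  (1 / 2 : ℂ) • (1 + (if s then (1 : ℂ) else -1) • ∑ i : Fin 3, (k i : ℂ) • pauli i)

lemma kron_mul (A B C D : Matrix (Fin 2) (Fin 2) ℂ) :
    kron A B * kron C D = kron (A * C) (B * D) := by
  simp [kron, Matrix.reindex_apply, ← Matrix.mul_kronecker_mul, Matrix.submatrix_mul_equiv]

lemma trace_kron (A B : Matrix (Fin 2) (Fin 2) ℂ) :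
    Matrix.trace (kron A B) = Matrix.trace A * Matrix.trace B := by
  have h : ∀ (M : Matrix (Fin 2 × Fin 2) (Fin 2 × Fin 2) ℂ),
      (Matrix.reindex finProdFinEquiv finProdFinEquiv M).trace = M.trace := by
    intro M
    rw [Matrix.reindex_apply, Matrix.trace, Matrix.trace]
    exact Fintype.sum_equiv finProdFinEquiv.symm _ _ fun i => rfl
  rw [kron, h, Matrix.trace_kronecker]

lemma kron_smul_left (c : ℂ) (A B : Matrix (Fin 2) (Fin 2) ℂ) :
    kron (c • A) B = c • kron A B := by
  ext i j; simp [kron, Matrix.smul_kronecker]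

lemma kron_smul_right (c : ℂ) (A B : Matrix (Fin 2) (Fin 2) ℂ) :
    kron A (c • B) = c • kron A B := by
  ext i j; simp [kron, Matrix.kronecker_smul]

lemma kron_sum_left {n : Type*} [Fintype n] (f : n → Matrix (Fin 2) (Fin 2) ℂ) (B) :
    kron (∑ i, f i) B = ∑ i, kron (f i) B := by
  ext i j
  simp [kron, Matrix.kroneckerMap_apply, Finset.sum_apply, Finset.sum_mul,
    Matrix.sum_apply]
lemma kron_sum_right {n : Type*} [Fintype n] (A) (f : n → Matrix (Fin 2) (Fin 2) ℂ) :
    kron A (∑ i, f i) = ∑ i, kron A (f i) := by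
  ext i j
  simp [kron, Matrix.kroneckerMap_apply, Finset.sum_apply, Finset.mul_sum,
    Matrix.sum_apply]

noncomputable def NN (k : Fin 3 → ℝ) : Matrix (Fin 2) (Fin 2) ℂ :=
  ∑ i : Fin 3, (k i : ℂ) • pauli i

lemma hkC (k : Fin 3 → ℝ) (hk : k ⬝ᵥ k = 1) :
    (k 0 : ℂ) * k 0 + (k 1 : ℂ) * k 1 + (k 2 : ℂ) * k 2 = 1 := by
  have := congrArg (Complex.ofReal) hk
  rw [dotProduct, Fin.sum_univ_three] at this
  push_cast at this
  linear_combination this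

lemma NN_sq (k : Fin 3 → ℝ) (hk : k ⬝ᵥ k = 1) : NN k * NN k = 1 := by
  have h := hkC k hk
  ext a b
  fin_cases a <;> fin_cases b
  all_goals simp [NN, pauli, Matrix.mul_apply, Fin.sum_univ_two, Fin.sum_univ_three,
    Matrix.one_apply, Matrix.sum_apply]
  all_goals try ring_nf
  all_goals try simp only [Complex.I_sq]
  all_goals try ring_nf
  all_goals linear_combination h

lemma NN_anti (k : Fin 3 → ℝ) (i : Fin 3) :
    pauli i * NN k + NN k * pauli i = ((2 : ℂ) * k i) • 1 := by
  ext a b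
  fin_cases i <;> fin_cases a <;> fin_cases b
  all_goals simp [NN, pauli, Matrix.mul_apply, Fin.sum_univ_two, Fin.sum_univ_three,
    Matrix.one_apply, Matrix.sum_apply]
  all_goals try ring_nf
  all_goals try simp only [Complex.I_sq]
  all_goals try ring_nf

lemma sum_proj (k : Fin 3 → ℝ) (A : Matrix (Fin 2) (Fin 2) ℂ) :
    ∑ s : Bool, proj k s * A * proj k s
      = (1 / 2 : ℂ) • (A + NN k * A * NN k) := by
  have ht : proj k true = (1 / 2 : ℂ) • (1 + NN k) := by
    simp [proj, NN]
  have hf : proj k false = (1 / 2 : ℂ) • (1 + -NN k) := by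
    simp [proj, NN]
  rw [Fintype.sum_bool, ht, hf]
  simp only [smul_mul_assoc, mul_smul_comm, add_mul, mul_add, one_mul, mul_one,
    neg_mul, mul_neg, neg_neg, smul_add, smul_neg, smul_smul]
  module

lemma sum_proj_id (k : Fin 3 → ℝ) (hk : k ⬝ᵥ k = 1) :
    ∑ s : Bool, proj k s * 1 * proj k s = 1 := by
  rw [sum_proj, mul_one, NN_sq k hk]
  module

lemma sum_proj_pauli (k : Fin 3 → ℝ) (hk : k ⬝ᵥ k = 1) (i : Fin 3) :
    ∑ s : Bool, proj k s * pauli i * proj k s = (k i : ℂ) • NN k := by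
  have h1 : NN k * pauli i * NN k = ((2 : ℂ) * k i) • NN k - pauli i := by
    have := NN_anti k i
    have h2 : NN k * pauli i = ((2 : ℂ) * k i) • 1 - pauli i * NN k := by
      linear_combination (norm := module) this
    rw [h2, sub_mul, smul_mul_assoc, one_mul, mul_assoc, NN_sq k hk, mul_one]
  rw [sum_proj, h1]
  module

lemma kron_one_one : kron (1 : Matrix (Fin 2) (Fin 2) ℂ) 1 = 1 := by
  ext i j
  simp [kron, Matrix.one_apply, Matrix.kroneckerMap_apply, Prod.ext_iff]

lemma main_red (ρ : Matrix (Fin 4) (Fin 4) ℂ) (k ℓ : Fin 3 → ℝ)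
    (χ : Matrix (Fin 4) (Fin 4) ℂ)
    (hχ : χ = ∑ s : Bool, ∑ t : Bool,
      kron (proj k s) (proj ℓ t) * ρ * kron (proj k s) (proj ℓ t))
    (P Q : Matrix (Fin 2) (Fin 2) ℂ) :
    Matrix.trace (χ * kron P Q)
      = Matrix.trace (ρ * kron (∑ s : Bool, proj k s * P * proj k s)
          (∑ t : Bool, proj ℓ t * Q * proj ℓ t)) := by
  subst hχ
  rw [kron_sum_left]
  simp only [kron_sum_right, Matrix.mul_sum, Matrix.trace_sum, Finset.sum_mul]
  refine Finset.sum_congr rfl fun s _ => Finset.sum_congr rfl fun t _ => ?_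
  rw [show kron (proj k s) (proj ℓ t) * ρ * kron (proj k s) (proj ℓ t) * kron P Q
      = (kron (proj k s) (proj ℓ t) * ρ) * (kron (proj k s) (proj ℓ t) * kron P Q) by
    rw [Matrix.mul_assoc]]
  rw [Matrix.trace_mul_comm, kron_mul, ← Matrix.mul_assoc, kron_mul,
    Matrix.trace_mul_comm]

/-- The `R`-matrix data of the measurement-induced classical-classical state
`χ = Σ_{s,t} (Π^A_s⊗Π^B_t) ρ (Π^A_s⊗Π^B_t)`:
`Tr[χ(σ₀⊗σ₀)] = Tr ρ`, `Tr[χ(σ_i⊗σ₀)] = (xK)_i`, `Tr[χ(σ₀⊗σ_j)] = (yL)_j`, and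
`Tr[χ(σ_i⊗σ_j)] = (KTL)_{ij}`, where `K = kᵀk`, `L = ℓᵀℓ`. -/
theorem stmt_3 (ρ : Matrix (Fin 4) (Fin 4) ℂ) (k ℓ : Fin 3 → ℝ)
    (hk : k ⬝ᵥ k = 1) (hℓ : ℓ ⬝ᵥ ℓ = 1)
    (χ : Matrix (Fin 4) (Fin 4) ℂ)
    (hχ : χ = ∑ s : Bool, ∑ t : Bool,
      kron (proj k s) (proj ℓ t) * ρ * kron (proj k s) (proj ℓ t))
    (x y : Fin 3 → ℂ) (T : Matrix (Fin 3) (Fin 3) ℂ)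
    (hx : ∀ i, x i = Matrix.trace (ρ * kron (pauli i) 1))
    (hy : ∀ j, y j = Matrix.trace (ρ * kron 1 (pauli j)))
    (hT : ∀ i j, T i j = Matrix.trace (ρ * kron (pauli i) (pauli j)))
    (K L : Matrix (Fin 3) (Fin 3) ℂ)
    (hK : K = vecMulVec (fun i => (k i : ℂ)) (fun i => (k i : ℂ)))
    (hL : L = vecMulVec (fun i => (ℓ i : ℂ)) (fun i => (ℓ i : ℂ))) :
    Matrix.trace (χ * kron 1 1) = Matrix.trace ρ ∧
    (∀ i, Matrix.trace (χ * kron (pauli i) 1) = vecMul x K i) ∧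
    (∀ j, Matrix.trace (χ * kron 1 (pauli j)) = vecMul y L j) ∧
    (∀ i j, Matrix.trace (χ * kron (pauli i) (pauli j)) = (K * T * L) i j) := by
  refine ⟨?_, ?_, ?_, ?_⟩
  · rw [main_red ρ k ℓ χ hχ, sum_proj_id k hk, sum_proj_id ℓ hℓ, kron_one_one, mul_one]
  · intro i
    rw [main_red ρ k ℓ χ hχ, sum_proj_id ℓ hℓ, sum_proj_pauli k hk i]
    simp only [NN, kron_smul_left, kron_sum_left, Matrix.mul_smul, Matrix.mul_sum,
      Matrix.trace_smul, Matrix.trace_sum, smul_eq_mul]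
    rw [hK]
    simp only [vecMul, dotProduct, vecMulVec_apply, Fin.sum_univ_three, hx]
    ring
  · intro j
    rw [main_red ρ k ℓ χ hχ, sum_proj_id k hk, sum_proj_pauli ℓ hℓ j]
    simp only [NN, kron_smul_right, kron_sum_right, Matrix.mul_smul, Matrix.mul_sum,
      Matrix.trace_smul, Matrix.trace_sum, smul_eq_mul]
    rw [hL]
    simp only [vecMul, dotProduct, vecMulVec_apply, Fin.sum_univ_three, hy]
    ring
  · intro i j
    rw [main_red ρ k ℓ χ hχ, sum_proj_pauli k hk i, sum_proj_pauli ℓ hℓ j]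
    simp only [NN, kron_smul_left, kron_smul_right, kron_sum_left, kron_sum_right,
      Matrix.mul_smul, Matrix.mul_sum, Matrix.trace_smul, Matrix.trace_sum, smul_eq_mul]
    rw [hK, hL]
    simp only [Matrix.mul_apply, vecMulVec_apply, Fin.sum_univ_three, hT]
    ring
end

section
/- Let x, y ∈ ℝ³ be row vectors and T a 3×3 real matrix; set X = xᵀx, Y = yᵀy. For unit vectors k, ℓ ∈ ℝ³ let K = kᵀk, L = ℓᵀℓ, and define the objective f(k,ℓ) = Tr(XK + YL + TLTᵀK) and the matrix M(ℓ) = X + TLTᵀ + ⟨ℓ,Yℓᵀ⟩·I₃. Then the supremum of f(k,ℓ) over all pairs of unit vectors (k,ℓ) equals the supremum over all unit vectors ℓ of λ_max(M(ℓ)), where λ_max(M(ℓ)) denotes the largest eigenvalue of the real symmetric matrix M(ℓ). That is, the two-sided optimization reduces to a one-sided optimization. -/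
/-!
Since `Tr(A K) = k ⬝ᵥ A k` and `k ⬝ᵥ k = 1`, the objective is the quadratic form
`f(k, ℓ) = k ⬝ᵥ M(ℓ) k`. For a real symmetric matrix the maximum of its quadratic form on the
unit sphere is its largest eigenvalue: expanding `k` in an orthonormal eigenbasis gives
`k ⬝ᵥ M k = ∑ λᵢ ⟨bᵢ, k⟩² ≤ λ_max`, with equality at the corresponding eigenvector. Hence
maximizing first over `k` and then over `ℓ` turns the two-sided supremum into the one-sided one.
-/

open Matrix

theorem OrthonormalBasis.sum_dotProduct_mul_dotProduct {ι n : Type*} [Fintype ι] [Fintype n]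
    (b : OrthonormalBasis ι ℝ (EuclideanSpace ℝ n)) (u w : n → ℝ) :
    ∑ i, (b i ⬝ᵥ u) * (b i ⬝ᵥ w) = u ⬝ᵥ w := by
  have := b.sum_inner_mul_inner (WithLp.toLp 2 u) (WithLp.toLp 2 w)
  simp only [EuclideanSpace.inner_eq_star_dotProduct, star_trivial] at this
  simp_rw [dotProduct_comm w] at this
  exact this

namespace Matrix

variable {n : Type*} [Fintype n]

lemma trace_mul_vecMulVec_self (A : Matrix n n ℝ) (k : n → ℝ) :
    trace (A * vecMulVec k k) = k ⬝ᵥ A *ᵥ k := by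
  rw [mul_vecMulVec, trace_vecMulVec, dotProduct_comm]

lemma isHermitian_vecMulVec_self (x : n → ℝ) : (vecMulVec x x).IsHermitian :=
  (posSemidef_vecMulVec_self_star x).isHermitian

namespace IsHermitian

variable [DecidableEq n] {A : Matrix n n ℝ} (hA : A.IsHermitian)

lemma mem_range_eigenvalues_of_mulVec_eq_smul {μ : ℝ} {v : n → ℝ} (hv : v ≠ 0)
    (h : A *ᵥ v = μ • v) : μ ∈ Set.range hA.eigenvalues := by
  rw [← hA.spectrum_real_eq_range_eigenvalues, ← spectrum_toLin']
  exact Module.End.HasEigenvalue.mem_spectrum <| Module.End.hasEigenvalue_of_hasEigenvector <|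
    Module.End.hasEigenvector_iff.mpr ⟨Module.End.mem_eigenspace_iff.mpr h, hv⟩

lemma eigenvectorBasis_dotProduct_mulVec (i : n) (k : n → ℝ) :
    hA.eigenvectorBasis i ⬝ᵥ A *ᵥ k = hA.eigenvalues i * (hA.eigenvectorBasis i ⬝ᵥ k) := by
  rw [dotProduct_mulVec, ← mulVec_transpose, ← conjTranspose_eq_transpose_of_trivial, hA.eq,
    hA.mulVec_eigenvectorBasis, smul_dotProduct, smul_eq_mul]

lemma dotProduct_mulVec_le {c : ℝ} (hc : ∀ i, hA.eigenvalues i ≤ c) (k : n → ℝ) :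
    k ⬝ᵥ A *ᵥ k ≤ c * (k ⬝ᵥ k) := by
  set b := hA.eigenvectorBasis
  calc k ⬝ᵥ A *ᵥ k = ∑ i, hA.eigenvalues i * (b i ⬝ᵥ k) ^ 2 := by
        rw [← b.sum_dotProduct_mul_dotProduct]
        congr 1 with i
        rw [hA.eigenvectorBasis_dotProduct_mulVec]
        ring
    _ ≤ ∑ i, c * (b i ⬝ᵥ k) ^ 2 := by gcongr with i; exact hc i
    _ = c * (k ⬝ᵥ k) := by simp_rw [← b.sum_dotProduct_mul_dotProduct k k, Finset.mul_sum, sq]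

theorem exists_isGreatest_eigenvalue [Nonempty n] (hA : A.IsHermitian) : ∃ lam : ℝ,
    IsGreatest {μ | ∃ v : n → ℝ, v ≠ 0 ∧ A *ᵥ v = μ • v} lam ∧
    IsGreatest ((fun k ↦ k ⬝ᵥ A *ᵥ k) '' {k | k ⬝ᵥ k = 1}) lam := by
  obtain ⟨i, hi⟩ := Finite.exists_max hA.eigenvalues
  set b := hA.eigenvectorBasis i
  have hb : b ⬝ᵥ b = 1 := by
    have : inner ℝ b b = 1 := by
      rw [real_inner_self_eq_norm_sq, hA.eigenvectorBasis.orthonormal.1 i, one_pow]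
    rwa [EuclideanSpace.inner_eq_star_dotProduct, star_trivial] at this
  refine ⟨hA.eigenvalues i, ⟨⟨b, ?_, hA.mulVec_eigenvectorBasis i⟩, ?_⟩, ⟨b, hb, ?_⟩, ?_⟩
  · intro h
    simp [h] at hb
  · rintro μ ⟨v, hv, h⟩
    obtain ⟨j, rfl⟩ := hA.mem_range_eigenvalues_of_mulVec_eq_smul hv h
    exact hi j
  · change b ⬝ᵥ A *ᵥ b = _
    rw [hA.mulVec_eigenvectorBasis, dotProduct_smul, hb, smul_eq_mul, mul_one]
  · rintro _ ⟨k, hk : k ⬝ᵥ k = 1, rfl⟩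
    simpa only [hk, mul_one] using hA.dotProduct_mulVec_le hi k

end IsHermitian

lemma trace_objective_eq_dotProduct_mulVec [DecidableEq n] (x y k ℓ : n → ℝ) (T : Matrix n n ℝ)
    (hk : k ⬝ᵥ k = 1) :
    trace (vecMulVec x x * vecMulVec k k + vecMulVec y y * vecMulVec ℓ ℓ +
        T * vecMulVec ℓ ℓ * Tᵀ * vecMulVec k k) =
      k ⬝ᵥ (vecMulVec x x + T * vecMulVec ℓ ℓ * Tᵀ + (ℓ ⬝ᵥ vecMulVec y y *ᵥ ℓ) • 1) *ᵥ k := by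
  simp only [trace_add, trace_mul_vecMulVec_self, add_mulVec, smul_mulVec, one_mulVec,
    dotProduct_add, dotProduct_smul, hk, smul_eq_mul]
  ring

end Matrix

/-- Reduction of the two-sided optimization to a one-sided one: with `X = xᵀx`,
`Y = yᵀy`, `K = kᵀk`, `L = ℓᵀℓ`, and `M(ℓ) = X + TLTᵀ + ⟨ℓ,Yℓᵀ⟩·I₃`, the supremum
of `f(k,ℓ) = Tr(XK + YL + TLTᵀK)` over pairs of unit vectors `(k,ℓ)` equals the
supremum over unit vectors `ℓ` of the largest eigenvalue of `M(ℓ)`. -/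
theorem stmt_8 (x y : Fin 3 → ℝ) (T : Matrix (Fin 3) (Fin 3) ℝ) :
    sSup {f : ℝ | ∃ k ℓ : Fin 3 → ℝ, k ⬝ᵥ k = 1 ∧ ℓ ⬝ᵥ ℓ = 1 ∧
        f = Matrix.trace (vecMulVec x x * vecMulVec k k +
          vecMulVec y y * vecMulVec ℓ ℓ +
          T * vecMulVec ℓ ℓ * Tᵀ * vecMulVec k k)} =
    sSup {lam : ℝ | ∃ ℓ : Fin 3 → ℝ, ℓ ⬝ᵥ ℓ = 1 ∧
        IsGreatest {μ : ℝ | ∃ v : Fin 3 → ℝ, v ≠ 0 ∧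
          (vecMulVec x x + T * vecMulVec ℓ ℓ * Tᵀ +
            (ℓ ⬝ᵥ (vecMulVec y y).mulVec ℓ) •
              (1 : Matrix (Fin 3) (Fin 3) ℝ)).mulVec v = μ • v} lam} := by
  have hM (ℓ : Fin 3 → ℝ) : (vecMulVec x x + T * vecMulVec ℓ ℓ * Tᵀ +
      (ℓ ⬝ᵥ vecMulVec y y *ᵥ ℓ) • (1 : Matrix (Fin 3) (Fin 3) ℝ)).IsHermitian := by
    refine ((isHermitian_vecMulVec_self x).add ?_).add (isHermitian_one.smul (.all _))
    simpa using isHermitian_mul_mul_conjTranspose T (isHermitian_vecMulVec_self ℓ)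
  apply csSup_eq_csSup_of_forall_exists_le
  · rintro _ ⟨k, ℓ, hk, hℓ, rfl⟩
    obtain ⟨lam, hE, hR⟩ := (hM ℓ).exists_isGreatest_eigenvalue
    refine ⟨lam, ⟨ℓ, hℓ, hE⟩, ?_⟩
    rw [trace_objective_eq_dotProduct_mulVec x y k ℓ T hk]
    exact hR.2 ⟨k, hk, rfl⟩
  · rintro b ⟨ℓ, hℓ, hb⟩
    obtain ⟨lam, hE, ⟨k, hk, hkl⟩, -⟩ := (hM ℓ).exists_isGreatest_eigenvalue
    refine ⟨b, ⟨k, ℓ, hk, hℓ, ?_⟩, le_rfl⟩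
    rw [trace_objective_eq_dotProduct_mulVec x y k ℓ T hk, hb.unique hE, ← hkl]
end

section
/- Let y ∈ ℝ³ be a row vector and T a 3×3 real matrix. Then the supremum over all pairs of unit vectors k, ℓ ∈ ℝ³ of Tr(yᵀy·ℓᵀℓ + T ℓᵀℓ Tᵀ · kᵀk) equals the largest eigenvalue of the real symmetric matrix yᵀy + TᵀT. (This gives the two-sided geometric measure for a two-qubit state whose marginal on the measured first subsystem is maximally mixed, i.e. x = 0: G = (1/4)[‖y‖² + ‖T‖²_F − λ_max(yᵀy + TᵀT)].) -/
/-!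
Every product in the trace is a product of rank-one matrices, so the objective equals
`(y ⬝ᵥ ℓ)² + (Tℓ ⬝ᵥ k)²`. For fixed `ℓ`, Cauchy–Schwarz makes `k = Tℓ / ‖Tℓ‖` optimal, leaving the
Rayleigh quotient `ℓᵀ (yᵀy + TᵀT) ℓ`, whose maximum over unit vectors is the top eigenvalue.
-/

open Matrix

namespace Matrix

variable {m n R : Type*} [Fintype n]

theorem trace_vecMulVec_mul_vecMulVec [CommSemiring R] (a b c d : n → R) :
    trace (vecMulVec a b * vecMulVec c d) = (b ⬝ᵥ c) * (a ⬝ᵥ d) := by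
  rw [vecMulVec_mul_vecMulVec, trace_vecMulVec, dotProduct_smul, smul_eq_mul]

theorem mul_vecMulVec_mul_transpose [CommSemiring R] (M N : Matrix m n R) (x y : n → R) :
    M * vecMulVec x y * Nᵀ = vecMulVec (M *ᵥ x) (N *ᵥ y) := by
  rw [mul_vecMulVec, vecMulVec_mul, vecMul_transpose]

theorem dotProduct_vecMulVec_add_transpose_mul_mulVec [Fintype m] [CommRing R]
    (y x : n → R) (T : Matrix m n R) :
    x ⬝ᵥ ((vecMulVec y y + Tᵀ * T) *ᵥ x) = (y ⬝ᵥ x) ^ 2 + (T *ᵥ x) ⬝ᵥ (T *ᵥ x) := by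
  rw [add_mulVec, dotProduct_add, vecMulVec_mulVec, ← mulVec_mulVec, dotProduct_mulVec x Tᵀ,
    vecMul_transpose, op_smul_eq_smul, dotProduct_smul, smul_eq_mul, dotProduct_comm x y, sq]

theorem trace_vecMulVec_mul_add_mul_vecMulVec_mul_transpose_mul [CommSemiring R]
    (y ℓ k : n → R) (T : Matrix n n R) :
    trace (vecMulVec y y * vecMulVec ℓ ℓ + T * vecMulVec ℓ ℓ * Tᵀ * vecMulVec k k)
      = (y ⬝ᵥ ℓ) ^ 2 + ((T *ᵥ ℓ) ⬝ᵥ k) ^ 2 := by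
  rw [trace_add, mul_vecMulVec_mul_transpose, trace_vecMulVec_mul_vecMulVec,
    trace_vecMulVec_mul_vecMulVec, sq, sq]

theorem dotProduct_sq_le_mul (u v : n → ℝ) : (u ⬝ᵥ v) ^ 2 ≤ (u ⬝ᵥ u) * (v ⬝ᵥ v) := by
  simpa only [dotProduct, sq] using Finset.sum_mul_sq_le_sq_mul_sq Finset.univ u v

theorem dotProduct_self_pos {v : n → ℝ} (hv : v ≠ 0) : 0 < v ⬝ᵥ v := by
  simpa using dotProduct_star_self_pos_iff.mpr hv

theorem dotProduct_self_inv_sqrt_smul {v : n → ℝ} (hv : v ≠ 0) :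
    ((√(v ⬝ᵥ v))⁻¹ • v) ⬝ᵥ ((√(v ⬝ᵥ v))⁻¹ • v) = 1 := by
  have hpos := dotProduct_self_pos hv
  rw [smul_dotProduct, dotProduct_smul, smul_eq_mul, smul_eq_mul, ← mul_assoc, ← mul_inv,
    Real.mul_self_sqrt hpos.le, inv_mul_cancel₀ hpos.ne']

theorem exists_dotProduct_self_eq_one_and_dotProduct_sq_eq [Nonempty n] (u : n → ℝ) :
    ∃ k : n → ℝ, k ⬝ᵥ k = 1 ∧ (u ⬝ᵥ k) ^ 2 = u ⬝ᵥ u := by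
  by_cases hu : u = 0
  · have hone : (fun _ ↦ 1 : n → ℝ) ≠ 0 := Function.ne_iff.mpr ⟨Classical.arbitrary n, one_ne_zero⟩
    exact ⟨_, dotProduct_self_inv_sqrt_smul hone, by simp [hu]⟩
  refine ⟨_, dotProduct_self_inv_sqrt_smul hu, ?_⟩
  have hpos := dotProduct_self_pos hu
  rw [dotProduct_smul, smul_eq_mul, mul_pow, inv_pow, Real.sq_sqrt hpos.le, sq,
    inv_mul_cancel_left₀ hpos.ne']

variable [DecidableEq n] {A : Matrix n n ℝ}

theorem IsHermitian.eigenvalues_le_of_mem_upperBounds (hA : A.IsHermitian) {c : ℝ}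
    (hc : c ∈ upperBounds {μ : ℝ | ∃ v : n → ℝ, v ≠ 0 ∧ A *ᵥ v = μ • v}) (i : n) :
    hA.eigenvalues i ≤ c := by
  refine hc ⟨hA.eigenvectorBasis i, fun h ↦ hA.eigenvectorBasis.orthonormal.ne_zero i ?_,
    hA.mulVec_eigenvectorBasis i⟩
  exact WithLp.ofLp_injective 2 h

theorem IsHermitian.dotProduct_mulVec_le_of_eigenvalues_le (hA : A.IsHermitian) {c : ℝ}
    (hc : ∀ i, hA.eigenvalues i ≤ c) (x : n → ℝ) : x ⬝ᵥ (A *ᵥ x) ≤ c * (x ⬝ᵥ x) := by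
  have hpsd : (c • 1 - A).PosSemidef := by
    set U := hA.eigenvectorUnitary
    have hA' : A = Unitary.conjStarAlgAut ℝ _ U (diagonal hA.eigenvalues) := hA.spectral_theorem
    have hc1 : c • (1 : Matrix n n ℝ) = Unitary.conjStarAlgAut ℝ _ U (c • 1) := by simp
    rw [hc1, hA', ← map_sub, Unitary.conjStarAlgAut_apply,
      Unitary.isUnit_coe.posSemidef_star_right_conjugate_iff, smul_one_eq_diagonal, diagonal_sub,
      posSemidef_diagonal_iff]
    exact fun i ↦ sub_nonneg.mpr (hc i)
  have hx := hpsd.dotProduct_mulVec_nonneg x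
  simp only [star_trivial, sub_mulVec, smul_mulVec, one_mulVec, dotProduct_sub, dotProduct_smul,
    smul_eq_mul] at hx
  linarith

end Matrix

/-- For a two-qubit state whose first marginal is maximally mixed (`x = 0`), the
supremum over pairs of unit vectors `k, ℓ` of `Tr(yᵀy·ℓᵀℓ + TℓᵀℓTᵀ·kᵀk)` equals
the largest eigenvalue of `yᵀy + TᵀT`. -/
theorem stmt_11 (y : Fin 3 → ℝ) (T : Matrix (Fin 3) (Fin 3) ℝ) (lam : ℝ)
    (hlam : IsGreatest {μ : ℝ | ∃ v : Fin 3 → ℝ, v ≠ 0 ∧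
      (vecMulVec y y + Tᵀ * T).mulVec v = μ • v} lam) :
    sSup {f : ℝ | ∃ k ℓ : Fin 3 → ℝ, k ⬝ᵥ k = 1 ∧ ℓ ⬝ᵥ ℓ = 1 ∧
        f = Matrix.trace (vecMulVec y y * vecMulVec ℓ ℓ +
          T * vecMulVec ℓ ℓ * Tᵀ * vecMulVec k k)} = lam := by
  set A := vecMulVec y y + Tᵀ * T
  have hA : A.IsHermitian := by
    simpa using ((posSemidef_vecMulVec_self_star y).add (posSemidef_conjTranspose_mul_self T)).1
  refine IsGreatest.csSup_eq ⟨?_, ?_⟩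
  · obtain ⟨v, hv0, hv⟩ := hlam.1
    set ℓ := (√(v ⬝ᵥ v))⁻¹ • v
    have hℓ : ℓ ⬝ᵥ ℓ = 1 := dotProduct_self_inv_sqrt_smul hv0
    obtain ⟨k, hk, hTk⟩ := exists_dotProduct_self_eq_one_and_dotProduct_sq_eq (T *ᵥ ℓ)
    refine ⟨k, ℓ, hk, hℓ, ?_⟩
    rw [trace_vecMulVec_mul_add_mul_vecMulVec_mul_transpose_mul, hTk,
      ← dotProduct_vecMulVec_add_transpose_mul_mulVec, mulVec_smul, hv, smul_comm,
      dotProduct_smul, hℓ, smul_eq_mul, mul_one]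
  · rintro f ⟨k, ℓ, hk, hℓ, rfl⟩
    calc _ = (y ⬝ᵥ ℓ) ^ 2 + ((T *ᵥ ℓ) ⬝ᵥ k) ^ 2 :=
          trace_vecMulVec_mul_add_mul_vecMulVec_mul_transpose_mul y ℓ k T
      _ ≤ (y ⬝ᵥ ℓ) ^ 2 + (T *ᵥ ℓ) ⬝ᵥ (T *ᵥ ℓ) := by
          simpa [hk] using dotProduct_sq_le_mul (T *ᵥ ℓ) k
      _ = ℓ ⬝ᵥ (A *ᵥ ℓ) := (dotProduct_vecMulVec_add_transpose_mul_mulVec y ℓ T).symm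
      _ ≤ lam * (ℓ ⬝ᵥ ℓ) := hA.dotProduct_mulVec_le_of_eigenvalues_le
          (hA.eigenvalues_le_of_mem_upperBounds hlam.2) ℓ
      _ = lam := by rw [hℓ, mul_one]
end
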